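/- Let S be a real 2×2 matrix with 0 < s := det S < 1 and let G be a real 2×2 symmetric positive definite matrix with det G = (1 − s)². Then there exist T₁, T₂ ∈ Sp(2,ℝ) such that S = √s · T₂ T₁ and G = (1 − s) · T₂ T₂ᵀ. (Hence every single-mode minimal-noise trace-preserving Gaussian CP map V ↦ S V Sᵀ + G of this kind decomposes as a symplectic transformation, followed by an attenuation of transmissivity √s, followed by a second symplectic transformation.) -/

import Mathlib

/-!
In dimension two, `T J Tᵀ = (det T) J`, so `Sp(2,ℝ)` is exactly the group of matrices of
determinant one. Writing `t = 1 - det S`, the matrix `t⁻¹ G` is positive definite of determinant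
one, so its square root `T₂` is symplectic with `G = t T₂ T₂ᵀ`. Then `T₂⁻¹ S` has determinant
`det S`, and dividing it by `√(det S)` gives the symplectic `T₁`.
-/

open Matrix

noncomputable section

/-- The 2×2 symplectic form `J = [[0,1],[-1,0]]`. -/
def J2 : Matrix (Fin 2) (Fin 2) ℝ := !![0, 1; -1, 0]

theorem mul_J2_mul_transpose (T : Matrix (Fin 2) (Fin 2) ℝ) : T * J2 * Tᵀ = T.det • J2 := by
  ext i j
  fin_cases i <;> fin_cases j <;>
    simp [J2, mul_apply, Fin.sum_univ_succ, det_fin_two] <;> ring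

theorem mul_J2_mul_transpose_of_det_eq_one {T : Matrix (Fin 2) (Fin 2) ℝ} (hT : T.det = 1) :
    T * J2 * Tᵀ = J2 := by
  rw [mul_J2_mul_transpose, hT, one_smul]

theorem det_inv_sqrt_det_smul {M : Matrix (Fin 2) (Fin 2) ℝ} (hM : 0 < M.det) :
    ((√M.det)⁻¹ • M).det = 1 := by
  rw [det_smul, Fintype.card_fin, inv_pow, Real.sq_sqrt hM.le, inv_mul_cancel₀ hM.ne']

open scoped MatrixOrder in
theorem Matrix.PosSemidef.sqrt_mul_transpose_sqrt {n : Type*} [Fintype n] [DecidableEq n]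
    {A : Matrix n n ℝ} (hA : A.PosSemidef) : CFC.sqrt A * (CFC.sqrt A)ᵀ = A := by
  rw [← conjTranspose_eq_transpose_of_trivial, (CFC.sqrt_nonneg A).posSemidef.isHermitian.eq,
    CFC.sqrt_mul_sqrt_self A hA.nonneg]

open scoped MatrixOrder in
theorem Matrix.PosSemidef.exists_det_eq_one_smul_mul_transpose {n : Type*} [Fintype n]
    [DecidableEq n] {A : Matrix n n ℝ} (hA : A.PosSemidef) {t : ℝ} (ht : 0 < t)
    (hdet : A.det = t ^ Fintype.card n) : ∃ T : Matrix n n ℝ, T.det = 1 ∧ A = t • (T * Tᵀ) := by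
  have hB : (t⁻¹ • A).PosSemidef := hA.smul (inv_nonneg.2 ht.le)
  have hBdet : (t⁻¹ • A).det = 1 := by
    rw [det_smul, hdet, ← mul_pow, inv_mul_cancel₀ ht.ne', one_pow]
  refine ⟨CFC.sqrt (t⁻¹ • A), ?_, ?_⟩
  · rw [hB.det_sqrt, hBdet, RCLike.sqrt_real, Real.sqrt_one]
  · rw [hB.sqrt_mul_transpose_sqrt, smul_smul, mul_inv_cancel₀ ht.ne', one_smul]

theorem minimal_noise_TGCP_decomposition_general (S G : Matrix (Fin 2) (Fin 2) ℝ)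
    (hs0 : 0 < S.det) (hs1 : S.det < 1)
    (hGpd : G.PosDef) (hGdet : G.det = (1 - S.det) ^ 2) :
    ∃ T₁ T₂ : Matrix (Fin 2) (Fin 2) ℝ,
      T₁ * J2 * T₁ᵀ = J2 ∧ T₂ * J2 * T₂ᵀ = J2 ∧
      S = Real.sqrt S.det • (T₂ * T₁) ∧
      G = (1 - S.det) • (T₂ * T₂ᵀ) := by
  obtain ⟨T₂, hT₂, hG⟩ :=
    hGpd.posSemidef.exists_det_eq_one_smul_mul_transpose (sub_pos.2 hs1) hGdet
  have hT₂S : (T₂⁻¹ * S).det = S.det := by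
    rw [det_mul, det_nonsing_inv, hT₂, Ring.inverse_one, one_mul]
  refine ⟨(√S.det)⁻¹ • (T₂⁻¹ * S), T₂, ?_, mul_J2_mul_transpose_of_det_eq_one hT₂, ?_, hG⟩
  · exact mul_J2_mul_transpose_of_det_eq_one (hT₂S ▸ det_inv_sqrt_det_smul (hT₂S ▸ hs0))
  · rw [Matrix.mul_smul, smul_smul, mul_inv_cancel₀ (Real.sqrt_pos.2 hs0).ne', one_smul,
      ← Matrix.mul_assoc, mul_nonsing_inv _ (by simp [hT₂]), Matrix.one_mul]

/-- decomposition of minimal-noise TGCP maps: if `S` is a real 2×2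
matrix with `0 < det S < 1` and `G` is a real symmetric positive definite 2×2 matrix
with `det G = (1 − det S)²`, then there are symplectic `T₁, T₂ ∈ Sp(2,ℝ)` with
`S = √(det S) · T₂ T₁` and `G = (1 − det S) · T₂ T₂ᵀ`; i.e. the map
`V ↦ S V Sᵀ + G` is a symplectic transformation, followed by an attenuation of
transmissivity `√(det S)`, followed by a second symplectic transformation. -/
theorem minimal_noise_TGCP_decomposition (S G : Matrix (Fin 2) (Fin 2) ℝ)
    (hs0 : 0 < S.det) (hs1 : S.det < 1)
    (hGsymm : G.IsSymm) (hGpd : G.PosDef) (hGdet : G.det = (1 - S.det) ^ 2) :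
    ∃ T₁ T₂ : Matrix (Fin 2) (Fin 2) ℝ,
      T₁ * J2 * T₁ᵀ = J2 ∧ T₂ * J2 * T₂ᵀ = J2 ∧
      S = Real.sqrt S.det • (T₂ * T₁) ∧
      G = (1 - S.det) • (T₂ * T₂ᵀ) :=
  minimal_noise_TGCP_decomposition_general S G hs0 hs1 hGpd hGdet
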